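/- Let G be a finite connected simple graph and s a vertex. Under threshold-1 Greenberg–Hastings dynamics started from the configuration in which s is excited and every other vertex is resting, every vertex v is in the excited state at exactly one time step, namely t = dist(s,v). -/

import Mathlib

/-- The three states of a Greenberg–Hastings excitable automaton node. -/
inductive GHState where
  | resting : GHState
  | excited : GHState
  | refractory : GHState
deriving DecidableEq

open GHState

/-- Number of excited neighbours of `v` in configuration `c`. -/
def excitedCount {V : Type*} (G : SimpleGraph V) [Fintype V] [DecidableRel G.Adj]
    (c : V → GHState) (v : V) : ℕ :=
  ((G.neighborFinset v).filter (fun u => c u = excited)).card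

/-- Greenberg–Hastings update map `F_S`: a resting vertex becomes excited iff its
number of excited neighbours lies in `S`; an excited vertex becomes refractory;
a refractory vertex becomes resting. -/
def ghStep {V : Type*} (G : SimpleGraph V) [Fintype V] [DecidableRel G.Adj]
    (S : Set ℕ) [DecidablePred (· ∈ S)] (c : V → GHState) : V → GHState :=
  fun v =>
    match c v with
    | resting => if excitedCount G c v ∈ S then excited else resting
    | excited => refractory
    | refractory => resting

/-!
The configuration at time `t` is the wave `ghWave G s t`: vertices at distance `t` from `s` are
excited, those at distance `d` with `d + 1 = t` refractory, all others resting; in a connected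
graph the wave at time `0` is the initial configuration. The update map carries the wave at time
`t` to the wave at time `t + 1`, because distances from `s` at the two ends of an edge
differ by at most one, and every vertex at distance `t + 1` has a neighbour at distance `t`.
-/

namespace SimpleGraph

variable {V : Type*} {G : SimpleGraph V} {s u v : V}

theorem Adj.dist_le_dist_add_one (h : G.Adj u v) : G.dist s v ≤ G.dist s u + 1 := by
  rcases h.diff_dist_adj (u := s) with h' | h' | h' <;> omega

theorem exists_adj_dist_eq_of_dist_eq_succ {t : ℕ} (hd : G.dist s v = t + 1) :
    ∃ u, G.Adj u v ∧ G.dist s u = t := by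
  have hreach : G.Reachable v s := Reachable.of_dist_ne_zero (by rw [dist_comm]; omega)
  obtain ⟨p, hp⟩ := hreach.exists_walk_length_eq_dist
  rw [dist_comm, hd] at hp
  cases p with
  | nil => simp at hp
  | @cons _ u _ h q =>
    have hq : G.dist s u ≤ t := by
      simp only [Walk.length_cons, add_left_inj] at hp
      simpa [hp] using dist_le q.reverse
    exact ⟨u, h.symm, le_antisymm hq (by have := h.symm.dist_le_dist_add_one (s := s); omega)⟩

theorem exists_adj_dist_eq_iff {t : ℕ} (h₀ : G.dist s v ≠ t) (h₁ : G.dist s v + 1 ≠ t) :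
    (∃ u, G.Adj v u ∧ G.dist s u = t) ↔ G.dist s v = t + 1 := by
  constructor
  · rintro ⟨u, hvu, rfl⟩
    have := hvu.dist_le_dist_add_one (s := s)
    have := hvu.symm.dist_le_dist_add_one (s := s)
    omega
  · intro hd
    obtain ⟨u, huv, hu⟩ := exists_adj_dist_eq_of_dist_eq_succ hd
    exact ⟨u, huv.symm, hu⟩

end SimpleGraph

section Step

variable {V : Type*} (G : SimpleGraph V) [Fintype V] [DecidableRel G.Adj]
  {S : Set ℕ} [DecidablePred (· ∈ S)] {c : V → GHState} {v : V}

theorem ghStep_of_excited (h : c v = excited) : ghStep G S c v = refractory := by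
  simp [ghStep, h]

theorem ghStep_of_refractory (h : c v = refractory) : ghStep G S c v = resting := by
  simp [ghStep, h]

theorem ghStep_of_resting (h : c v = resting) :
    ghStep G S c v = if excitedCount G c v ∈ S then excited else resting := by
  simp [ghStep, h]

theorem one_le_excitedCount_iff :
    excitedCount G c v ∈ {n : ℕ | 1 ≤ n} ↔ ∃ u, G.Adj v u ∧ c u = excited := by
  simp [excitedCount, Nat.one_le_iff_ne_zero]

end Step

section Wave

variable {V : Type*} {G : SimpleGraph V} {s v : V} {t : ℕ}

variable (G) in
noncomputable def ghWave (s : V) (t : ℕ) : V → GHState :=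
  fun v =>
    if G.dist s v = t then excited
    else if G.dist s v + 1 = t then refractory
    else resting

theorem ghWave_of_dist_eq (h : G.dist s v = t) : ghWave G s t v = excited := by
  simp [ghWave, h]

theorem ghWave_of_dist_add_one_eq (h : G.dist s v + 1 = t) : ghWave G s t v = refractory := by
  simp [ghWave, h.symm]

theorem ghWave_of_dist_ne (h₀ : G.dist s v ≠ t) (h₁ : G.dist s v + 1 ≠ t) :
    ghWave G s t v = resting := by
  simp [ghWave, h₀, h₁]

theorem ghWave_eq_excited_iff : ghWave G s t v = excited ↔ G.dist s v = t := by
  unfold ghWave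
  split_ifs <;> simp_all

theorem ghWave_zero [DecidableEq V] (hconn : G.Connected) (s : V) :
    ghWave G s 0 = fun u => if u = s then excited else resting := by
  funext u
  simp [ghWave, hconn.dist_eq_zero_iff, eq_comm]

variable [Fintype V] [DecidableRel G.Adj]

theorem ghStep_ghWave (s : V) (t : ℕ) :
    ghStep G {n : ℕ | 1 ≤ n} (ghWave G s t) = ghWave G s (t + 1) := by
  funext v
  by_cases h₀ : G.dist s v = t
  · rw [ghStep_of_excited G (ghWave_of_dist_eq h₀), ghWave_of_dist_add_one_eq (by omega)]
  by_cases h₁ : G.dist s v + 1 = t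
  · rw [ghStep_of_refractory G (ghWave_of_dist_add_one_eq h₁),
      ghWave_of_dist_ne (by omega) (by omega)]
  have hfires : excitedCount G (ghWave G s t) v ∈ {n : ℕ | 1 ≤ n} ↔ G.dist s v = t + 1 := by
    simp only [one_le_excitedCount_iff, ghWave_eq_excited_iff]
    exact SimpleGraph.exists_adj_dist_eq_iff h₀ h₁
  rw [ghStep_of_resting G (ghWave_of_dist_ne h₀ h₁)]
  by_cases hd : G.dist s v = t + 1
  · rw [if_pos (hfires.mpr hd), ghWave_of_dist_eq hd]
  · rw [if_neg (mt hfires.mp hd), ghWave_of_dist_ne hd (by omega)]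

theorem iterate_ghStep_ghWave_zero (s : V) (t : ℕ) :
    (ghStep G {n : ℕ | 1 ≤ n})^[t] (ghWave G s 0) = ghWave G s t := by
  induction t with
  | zero => rfl
  | succ t ih => rw [Function.iterate_succ_apply', ih, ghStep_ghWave]

end Wave

/-- Under threshold-1 Greenberg–Hastings dynamics started from a single excited
vertex `s` (all other vertices resting), every vertex `v` is excited at exactly
one time step, namely `t = dist(s,v)`. -/
theorem excited_exactly_once {V : Type*} (G : SimpleGraph V)
    [Fintype V] [DecidableEq V] [DecidableRel G.Adj]
    (hconn : G.Connected) (s : V) :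
    ∀ v : V, ∀ t : ℕ,
      (ghStep G {n : ℕ | 1 ≤ n})^[t] (fun u => if u = s then excited else resting) v
        = excited ↔ t = G.dist s v := by
  intro v t
  rw [← ghWave_zero hconn, iterate_ghStep_ghWave_zero, ghWave_eq_excited_iff, eq_comm]
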